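/- arXiv:1812.09576 — 5 statements merged into one kernel-verified Lean document; each statement's English description precedes it below -/
import Mathlib

section
/- Let d ≥ 2 and let p be a complex polynomial in d variables whose degree in the j-th variable is at most N_j − 1 for each 1 ≤ j ≤ d. Let 𝒳 be the tensor with entries X_{i₁,…,i_d} = p(x^{(1)}_{i₁},…,x^{(d)}_{i_d}) for arbitrary nodes x^{(j)}_1,…,x^{(j)}_{n_j} ∈ ℂ. Set r = min_{1≤k≤d} ∏_{j≠k} N_j. Then there exist vectors a^{(ℓ,j)} ∈ ℂ^{n_j} for 1 ≤ ℓ ≤ r and 1 ≤ j ≤ d such that X_{i₁,…,i_d} = ∑_{ℓ=1}^{r} ∏_{j=1}^{d} a^{(ℓ,j)}_{i_j} for all indices; i.e., 𝒳 is a sum of at most r rank-one tensors. -/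
/-- Paper's Lemma 3.1 (CP part): if `𝒳` is obtained by sampling a multivariate
polynomial `p` whose degree in variable `j` is at most `N j - 1` on a
tensor-product grid, then `𝒳` is a sum of at most
`r = min_{1 ≤ k ≤ d} ∏_{j ≠ k} N j` rank-one tensors. -/
theorem cp_rank_of_poly_sample
    (d : ℕ) (hd : 2 ≤ d) (N n : Fin d → ℕ)
    (p : MvPolynomial (Fin d) ℂ)
    (hdeg : ∀ j : Fin d, p.degreeOf j < N j)
    (x : (j : Fin d) → Fin (n j) → ℂ)
    (X : ((j : Fin d) → Fin (n j)) → ℂ)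
    (hX : ∀ i, X i = MvPolynomial.eval (fun j => x j (i j)) p) :
    ∃ a : Fin (Finset.univ.inf' (Finset.univ_nonempty_iff.mpr ⟨⟨0, by omega⟩⟩)
          fun k : Fin d => ∏ j ∈ Finset.univ.erase k, N j) →
        (j : Fin d) → Fin (n j) → ℂ,
      ∀ i, X i = ∑ ℓ, ∏ j, a ℓ j (i j) := by
  classical
  obtain ⟨k, -, hk⟩ := Finset.exists_mem_eq_inf'
    (Finset.univ_nonempty_iff.mpr ⟨(⟨0, by omega⟩ : Fin d)⟩)
    (fun k : Fin d => ∏ j ∈ Finset.univ.erase k, N j)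
  have hNpos : ∀ j, 0 < N j := fun j => lt_of_le_of_lt (Nat.zero_le _) (hdeg j)
  have hcard : Fintype.card (∀ j : {j : Fin d // j ≠ k}, Fin (N j)) =
      Finset.univ.inf' (Finset.univ_nonempty_iff.mpr ⟨⟨0, by omega⟩⟩)
        (fun k : Fin d => ∏ j ∈ Finset.univ.erase k, N j) := by
    rw [hk, Fintype.card_pi]
    simp only [Fintype.card_fin]
    exact (Finset.prod_subtype (Finset.univ.erase k) (fun j => by simp) N).symm
  set e := (Fintype.equivFinOfCardEq hcard).symm with he
  set w : (∀ j : {j : Fin d // j ≠ k}, Fin (N j)) → Fin (N k) → (Fin d → ℕ) :=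
    fun t m j => if h : j = k then (m : ℕ) else (t ⟨j, h⟩ : ℕ) with hw
  set G : (∀ j : {j : Fin d // j ≠ k}, Fin (N j)) → Fin (N k) → (Fin d →₀ ℕ) :=
    fun t m => Finsupp.equivFunOnFinite.symm (w t m) with hG
  set v : (∀ j : {j : Fin d // j ≠ k}, Fin (N j)) → (Fin d → ℕ) :=
    fun t j => if h : j = k then 0 else (t ⟨j, h⟩ : ℕ) with hv
  refine ⟨fun ℓ j i =>
    if h : j = k then ∑ m : Fin (N k), MvPolynomial.coeff (G (e ℓ) m) p * (x j i) ^ (m : ℕ)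
    else (x j i) ^ ((e ℓ) ⟨j, h⟩ : ℕ), fun i => ?_⟩
  rw [hX]
  set y : Fin d → ℂ := fun j => x j (i j) with hy
  set g : (Fin d →₀ ℕ) → ℂ := fun μ => MvPolynomial.coeff μ p * ∏ j, y j ^ (μ j) with hg
  -- Step A : eval as a sum over the full grid
  have stepA : MvPolynomial.eval y p =
      ∑ σ : (∀ j : Fin d, Fin (N j)),
        MvPolynomial.coeff (Finsupp.equivFunOnFinite.symm fun j => (σ j : ℕ)) p *
          ∏ j, y j ^ (σ j : ℕ) := by
    rw [MvPolynomial.eval_eq']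
    set F : (∀ j : Fin d, Fin (N j)) → (Fin d →₀ ℕ) :=
      fun σ => Finsupp.equivFunOnFinite.symm fun j => (σ j : ℕ) with hF
    have hFinj : Function.Injective F := by
      intro σ τ h
      funext j
      have := congrArg (fun f : Fin d →₀ ℕ => f j) h
      simpa [hF, Fin.ext_iff] using this
    have hsub : p.support ⊆ Finset.univ.image F := by
      intro μ hμ
      have hμlt : ∀ j, μ j < N j := fun j =>
        (MvPolynomial.degreeOf_lt_iff (hNpos j)).mp (hdeg j) μ hμ
      refine Finset.mem_image.mpr ⟨fun j => ⟨μ j, hμlt j⟩, Finset.mem_univ _, ?_⟩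
      ext j
      simp [hF]
    have h1 : ∑ μ ∈ Finset.univ.image F, g μ =
        ∑ σ : (∀ j : Fin d, Fin (N j)), g (F σ) :=
      Finset.sum_image (fun a _ b _ h => hFinj h)
    have h2 : ∑ μ ∈ Finset.univ.image F, g μ = ∑ μ ∈ p.support, g μ := by
      refine (Finset.sum_subset hsub ?_).symm
      intro μ _ hμ
      simp [hg, MvPolynomial.notMem_support_iff.mp hμ]
    have h3 : ∀ σ : (∀ j : Fin d, Fin (N j)), ∀ j, (F σ) j = (σ j : ℕ) := by
      intro σ j; simp [hF]
    calc ∑ μ ∈ p.support, MvPolynomial.coeff μ p * ∏ j, y j ^ (μ j)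
        = ∑ σ : (∀ j : Fin d, Fin (N j)), g (F σ) := by rw [← h1, h2]
      _ = _ := by
          refine Finset.sum_congr rfl fun σ _ => ?_
          rw [hg]
          simp only [hF]
          refine congrArg _ (Finset.prod_congr rfl fun j _ => ?_)
          rw [show (Finsupp.equivFunOnFinite.symm fun j => ((σ j : ℕ))) j = (σ j : ℕ) from by simp]
  rw [stepA]
  -- Step B : regroup the grid sum
  set f : (∀ j : {j : Fin d // j ≠ k}, Fin (N j)) × Fin (N k) → (∀ j : Fin d, Fin (N j)) :=
    fun tm j => if h : j = k then Fin.cast (by rw [h]) tm.2 else tm.1 ⟨j, h⟩ with hf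
  have hfval : ∀ tm j, ((f tm j : ℕ)) = w tm.1 tm.2 j := by
    intro tm j
    by_cases h : j = k
    · simp [hf, hw, h]
    · simp [hf, hw, h]
  have hfbij : Function.Bijective f := by
    rw [Function.bijective_iff_has_inverse]
    refine ⟨fun σ => ⟨fun j => σ j, σ k⟩, fun tm => ?_, fun σ => ?_⟩
    · ext j
      · simp [hf, j.2]
      · simp [hf]
    · funext j
      by_cases h : j = k
      · subst h; simp [hf]
      · simp [hf, h]
  have stepB : ∑ σ : (∀ j : Fin d, Fin (N j)),
        MvPolynomial.coeff (Finsupp.equivFunOnFinite.symm fun j => (σ j : ℕ)) p *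
          ∏ j, y j ^ (σ j : ℕ) =
      ∑ tm : (∀ j : {j : Fin d // j ≠ k}, Fin (N j)) × Fin (N k),
        MvPolynomial.coeff (G tm.1 tm.2) p * ∏ j, y j ^ (w tm.1 tm.2 j) := by
    refine (Fintype.sum_bijective f hfbij _ _ fun tm => ?_).symm
    have hc : (Finsupp.equivFunOnFinite.symm fun j => ((f tm j : ℕ))) = G tm.1 tm.2 := by
      rw [hG]
      exact congrArg _ (funext fun j => hfval tm j)
    rw [← hc]
    exact congrArg _ (Finset.prod_congr rfl fun j _ => by rw [hfval])
  rw [stepB, Fintype.sum_prod_type]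
  -- common canonical form for each (t, m)
  have key : ∀ t m, MvPolynomial.coeff (G t m) p * ∏ j, y j ^ (w t m j) =
      MvPolynomial.coeff (G t m) p * y k ^ (m : ℕ) *
        ∏ j ∈ Finset.univ.erase k, y j ^ (v t j) := by
    intro t m
    rw [← Finset.mul_prod_erase Finset.univ (fun j => y j ^ (w t m j)) (Finset.mem_univ k)]
    have h4 : ∏ j ∈ Finset.univ.erase k, y j ^ (w t m j) =
        ∏ j ∈ Finset.univ.erase k, y j ^ (v t j) := by
      refine Finset.prod_congr rfl fun j hj => ?_
      have hjk : j ≠ k := Finset.ne_of_mem_erase hj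
      simp [hw, hv, hjk]
    rw [h4, show w t m k = (m : ℕ) from by simp [hw]]
    ring
  -- LHS : transport the sum over t to a sum over ℓ
  rw [show (∑ t, ∑ m : Fin (N k),
        MvPolynomial.coeff (G t m) p * ∏ j, y j ^ (w t m j)) =
      ∑ ℓ, ∑ m : Fin (N k),
        MvPolynomial.coeff (G (e ℓ) m) p * ∏ j, y j ^ (w (e ℓ) m j) from
    (Equiv.sum_comp e fun t => ∑ m : Fin (N k),
      MvPolynomial.coeff (G t m) p * ∏ j, y j ^ (w t m j)).symm]
  refine Finset.sum_congr rfl fun ℓ _ => ?_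
  rw [← Finset.mul_prod_erase Finset.univ _ (Finset.mem_univ k)]
  beta_reduce
  rw [dif_pos rfl]
  have hprod : ∏ j ∈ Finset.univ.erase k,
      (if h : j = k then ∑ m : Fin (N k), MvPolynomial.coeff (G (e ℓ) m) p * (x j (i j)) ^ (m : ℕ)
       else (x j (i j)) ^ ((e ℓ) ⟨j, h⟩ : ℕ)) =
      ∏ j ∈ Finset.univ.erase k, y j ^ (v (e ℓ) j) := by
    refine Finset.prod_congr rfl fun j hj => ?_
    have hjk : j ≠ k := Finset.ne_of_mem_erase hj
    simp [hv, hjk, hy]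
  rw [hprod, Finset.sum_mul]
  refine Finset.sum_congr rfl fun m _ => ?_
  rw [key (e ℓ) m]
end

section
/- Let 𝒳 ∈ ℂ^{n₁×n₂×n₃} admit a decomposition X_{ijk} = ∑_{ℓ=1}^{r} A_{iℓ} B_{jℓ} C_{kℓ} with factor matrices A ∈ ℂ^{n₁×r}, B ∈ ℂ^{n₂×r}, C ∈ ℂ^{n₃×r} of matrix ranks r₁, r₂, r₃ respectively. Then 𝒳 can be written as a sum of at most min(r₂r₃, r₁r₃, r₁r₂) rank-one tensors; i.e., there exist vectors u^{(ℓ)} ∈ ℂ^{n₁}, v^{(ℓ)} ∈ ℂ^{n₂}, w^{(ℓ)} ∈ ℂ^{n₃}, 1 ≤ ℓ ≤ min(r₂r₃, r₁r₃, r₁r₂), with X_{ijk} = ∑_ℓ u^{(ℓ)}_i v^{(ℓ)}_j w^{(ℓ)}_k. -/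
/-!
Factor `A = A₁ A₂` and `B = B₁ B₂` through their ranks `r₁` and `r₂`. Then
`X_{ijk} = ∑_{a,b} (A₁)_{ia} (B₁)_{jb} (∑_ℓ (A₂)_{aℓ} (B₂)_{bℓ} C_{kℓ})`, a sum of `r₁ r₂`
rank-one tensors; the bounds `r₁ r₃` and `r₂ r₃` follow by permuting the modes of `X`.
-/

open Finset
open scoped Matrix

theorem Matrix.exists_mul_eq_of_rank {K m n : Type*} [Field K] [Fintype n] (A : Matrix m n K) :
    ∃ (A₁ : Matrix m (Fin A.rank) K) (A₂ : Matrix (Fin A.rank) n K), A₁ * A₂ = A := by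
  classical
  let b : Module.Basis (Fin A.rank) K (LinearMap.range A.mulVecLin) :=
    Module.finBasisOfFinrankEq K _ rfl
  have hcol (ℓ : n) : Aᵀ ℓ ∈ LinearMap.range A.mulVecLin :=
    ⟨Pi.single ℓ 1, by ext; simp⟩
  refine ⟨Matrix.of fun i p => (b p : m → K) i, Matrix.of fun p ℓ => b.repr ⟨_, hcol ℓ⟩ p, ?_⟩
  ext i ℓ
  have h := congr_fun (congr_arg Subtype.val (b.sum_repr ⟨_, hcol ℓ⟩)) i
  simp only [Submodule.coe_sum, Submodule.coe_smul, Finset.sum_apply, Pi.smul_apply,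
    smul_eq_mul, Matrix.transpose_apply] at h
  simp only [Matrix.mul_apply, Matrix.of_apply, ← h, mul_comm]

section CPDecomp

variable {K m₁ m₂ m₃ : Type*} [CommSemiring K]

def HasCPDecomp (N : ℕ) (X : m₁ → m₂ → m₃ → K) : Prop :=
  ∃ (u : Fin N → m₁ → K) (v : Fin N → m₂ → K) (w : Fin N → m₃ → K),
    ∀ i j k, X i j k = ∑ ℓ, u ℓ i * v ℓ j * w ℓ k

theorem hasCPDecomp_of_equiv {ι : Type*} [Fintype ι] {N : ℕ} (e : ι ≃ Fin N)
    {X : m₁ → m₂ → m₃ → K} (u : ι → m₁ → K) (v : ι → m₂ → K) (w : ι → m₃ → K)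
    (hX : ∀ i j k, X i j k = ∑ ℓ, u ℓ i * v ℓ j * w ℓ k) : HasCPDecomp N X :=
  ⟨fun ℓ => u (e.symm ℓ), fun ℓ => v (e.symm ℓ), fun ℓ => w (e.symm ℓ), fun i j k =>
    (hX i j k).trans (e.symm.sum_comp fun ℓ => u ℓ i * v ℓ j * w ℓ k).symm⟩

namespace HasCPDecomp

variable {N : ℕ} {X : m₁ → m₂ → m₃ → K}

theorem of_rotate (h : HasCPDecomp N fun j k i => X i j k) : HasCPDecomp N X := by
  obtain ⟨u, v, w, h⟩ := h
  exact ⟨w, u, v, fun i j k => (h j k i).trans (sum_congr rfl fun ℓ _ => by ring)⟩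

theorem of_swap (h : HasCPDecomp N fun i k j => X i j k) : HasCPDecomp N X := by
  obtain ⟨u, v, w, h⟩ := h
  exact ⟨u, w, v, fun i j k => (h i k j).trans (sum_congr rfl fun ℓ _ => mul_right_comm ..)⟩

end HasCPDecomp

end CPDecomp

theorem Matrix.sum_mul_apply_mul_mul_apply_mul {K m₁ m₂ m₃ n p q : Type*} [CommSemiring K]
    [Fintype n] [Fintype p] [Fintype q]
    (A₁ : Matrix m₁ p K) (A₂ : Matrix p n K) (B₁ : Matrix m₂ q K) (B₂ : Matrix q n K)
    (C : Matrix m₃ n K) (i : m₁) (j : m₂) (k : m₃) :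
    ∑ ℓ, (A₁ * A₂) i ℓ * (B₁ * B₂) j ℓ * C k ℓ =
      ∑ ab : p × q, A₁ i ab.1 * B₁ j ab.2 * ∑ ℓ, A₂ ab.1 ℓ * B₂ ab.2 ℓ * C k ℓ := by
  simp only [Matrix.mul_apply, sum_mul, mul_sum, Fintype.sum_prod_type]
  rw [sum_comm]
  refine (sum_congr rfl fun b _ => sum_comm).trans ?_
  rw [sum_comm]
  exact sum_congr rfl fun a _ => sum_congr rfl fun b _ => sum_congr rfl fun ℓ _ => by ring

theorem hasCPDecomp_rank_mul_rank {K m₁ m₂ m₃ n : Type*} [Field K] [Fintype n]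
    (A : Matrix m₁ n K) (B : Matrix m₂ n K) (C : Matrix m₃ n K) {X : m₁ → m₂ → m₃ → K}
    (hX : ∀ i j k, X i j k = ∑ ℓ, A i ℓ * B j ℓ * C k ℓ) :
    HasCPDecomp (A.rank * B.rank) X := by
  obtain ⟨A₁, A₂, hA⟩ := A.exists_mul_eq_of_rank
  obtain ⟨B₁, B₂, hB⟩ := B.exists_mul_eq_of_rank
  refine hasCPDecomp_of_equiv finProdFinEquiv (fun ab i => A₁ i ab.1) (fun ab j => B₁ j ab.2)
    (fun ab k => ∑ ℓ, A₂ ab.1 ℓ * B₂ ab.2 ℓ * C k ℓ) fun i j k => ?_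
  rw [hX, ← Matrix.sum_mul_apply_mul_mul_apply_mul, hA, hB]

/-- Paper's inequality (2.5): if `X_{ijk} = ∑_ℓ A_{iℓ} B_{jℓ} C_{kℓ}` is a CP
decomposition with factor matrices of ranks `r₁, r₂, r₃`, then `X` is a sum of
at most `min (r₂r₃) (min (r₁r₃) (r₁r₂))` rank-one tensors. -/
theorem cp_rank_le_of_factor_ranks
    (n₁ n₂ n₃ r : ℕ)
    (A : Matrix (Fin n₁) (Fin r) ℂ) (B : Matrix (Fin n₂) (Fin r) ℂ)
    (C : Matrix (Fin n₃) (Fin r) ℂ)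
    (r₁ r₂ r₃ : ℕ) (hr₁ : A.rank = r₁) (hr₂ : B.rank = r₂) (hr₃ : C.rank = r₃)
    (X : Fin n₁ → Fin n₂ → Fin n₃ → ℂ)
    (hX : ∀ i j k, X i j k = ∑ ℓ, A i ℓ * B j ℓ * C k ℓ) :
    ∃ (u : Fin (min (r₂ * r₃) (min (r₁ * r₃) (r₁ * r₂))) → Fin n₁ → ℂ)
      (v : Fin (min (r₂ * r₃) (min (r₁ * r₃) (r₁ * r₂))) → Fin n₂ → ℂ)
      (w : Fin (min (r₂ * r₃) (min (r₁ * r₃) (r₁ * r₂))) → Fin n₃ → ℂ),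
      ∀ i j k, X i j k = ∑ ℓ, u ℓ i * v ℓ j * w ℓ k := by
  subst hr₁ hr₂ hr₃
  have h₁₂ : HasCPDecomp (A.rank * B.rank) X := hasCPDecomp_rank_mul_rank A B C hX
  have h₁₃ : HasCPDecomp (A.rank * C.rank) X :=
    .of_swap <| hasCPDecomp_rank_mul_rank A C B fun i k j =>
      (hX i j k).trans (sum_congr rfl fun ℓ _ => mul_right_comm ..)
  have h₂₃ : HasCPDecomp (B.rank * C.rank) X :=
    .of_rotate <| hasCPDecomp_rank_mul_rank B C A fun j k i =>
      (hX i j k).trans (sum_congr rfl fun ℓ _ => by ring)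
  obtain h | h := min_choice (B.rank * C.rank) (min (A.rank * C.rank) (A.rank * B.rank))
  · rw [h]; exact h₂₃
  obtain h' | h' := min_choice (A.rank * C.rank) (A.rank * B.rank)
  · rw [h, h']; exact h₁₃
  · rw [h, h']; exact h₁₂
end

section
/- Let X ∈ ℂ^{m×n} with m ≥ n, and let σ₁ ≥ ⋯ ≥ σ_n ≥ 0 be its singular values, i.e., the nonincreasingly ordered square roots of the eigenvalues of the Hermitian matrix X*X. Suppose r ≥ 1 is an integer and 0 ≤ Z < 1 is such that σ_{j+r} ≤ Z·σ_j whenever 1 ≤ j ≤ j+r ≤ n. Then there exists a matrix Y ∈ ℂ^{m×n} of rank at most r with ‖X − Y‖_F ≤ Z·‖X‖_F, where ‖·‖_F denotes the Frobenius norm. -/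
/-!
Let `U` be a unitary diagonalizing `XᴴX`. The columns of `X U` are then orthogonal, with squared
norms the eigenvalues `σᵢ²`. Keeping only the columns belonging to the `r` largest singular values
and rotating back by `Uᴴ` gives a matrix `Y` of rank at most `r` with `‖X - Y‖_F² = ∑_{i ≥ r} σᵢ²`.
The decay hypothesis bounds `σᵢ²` by `Z² σ_{i-r}²` for `i ≥ r`, and `i ↦ i - r` is injective there,
so this tail is at most `Z² ∑ σᵢ² = Z² ‖X‖_F²`.
-/

open Matrix Finset

namespace Matrix

variable {𝕜 : Type*} [RCLike 𝕜] {m n : Type*} [Fintype m] [Fintype n]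

theorem sum_norm_sq_eq_re_trace_conjTranspose_mul_self (M : Matrix m n 𝕜) :
    ∑ i, ∑ j, ‖M i j‖ ^ 2 = RCLike.re (Mᴴ * M).trace := by
  simp only [trace, diag, mul_apply, conjTranspose_apply, map_sum, RCLike.star_def,
    RCLike.conj_mul, ← RCLike.ofReal_pow, RCLike.ofReal_re]
  exact Finset.sum_comm

variable [DecidableEq n]

theorem sum_norm_sq_mul_star_unitary (M : Matrix m n 𝕜) {U : Matrix n n 𝕜}
    (hU : U ∈ unitaryGroup n 𝕜) :
    ∑ i, ∑ j, ‖(M * star U) i j‖ ^ 2 = ∑ i, ∑ j, ‖M i j‖ ^ 2 := by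
  rw [sum_norm_sq_eq_re_trace_conjTranspose_mul_self,
    sum_norm_sq_eq_re_trace_conjTranspose_mul_self, conjTranspose_mul, ← star_eq_conjTranspose,
    star_star, show U * Mᴴ * (M * star U) = U * (Mᴴ * M) * star U by simp only [Matrix.mul_assoc],
    trace_mul_cycle, (Unitary.mem_iff.mp hU).1, one_mul]

theorem IsHermitian.star_eigenvectorUnitary_mul_mul_eigenvectorUnitary {A : Matrix n n 𝕜}
    (hA : A.IsHermitian) :
    star (↑hA.eigenvectorUnitary : Matrix n n 𝕜) * A * (↑hA.eigenvectorUnitary : Matrix n n 𝕜) =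
      diagonal (RCLike.ofReal ∘ hA.eigenvalues) := by
  rw [← Unitary.conjStarAlgAut_star_apply (S := 𝕜)]
  exact hA.conjStarAlgAut_star_eigenvectorUnitary

theorem sum_norm_sq_mul_eigenvectorUnitary_mul_diagonal (X : Matrix m n 𝕜) (w : n → 𝕜) :
    ∑ i, ∑ j, ‖(X * (↑(isHermitian_conjTranspose_mul_self X).eigenvectorUnitary : Matrix n n 𝕜) *
        diagonal w) i j‖ ^ 2 =
      ∑ j, ‖w j‖ ^ 2 * (isHermitian_conjTranspose_mul_self X).eigenvalues j := by
  set hA := isHermitian_conjTranspose_mul_self X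
  set U : Matrix n n 𝕜 := ↑hA.eigenvectorUnitary
  have hdiag : (X * U * diagonal w)ᴴ * (X * U * diagonal w) =
      diagonal (fun j => star (w j) * hA.eigenvalues j * w j) := by
    rw [conjTranspose_mul, conjTranspose_mul, diagonal_conjTranspose, ← star_eq_conjTranspose U,
      show diagonal (star w) * (star U * Xᴴ) * (X * U * diagonal w) =
        diagonal (star w) * (star U * (Xᴴ * X) * U) * diagonal w by simp only [Matrix.mul_assoc],
      hA.star_eigenvectorUnitary_mul_mul_eigenvectorUnitary, diagonal_mul_diagonal,
      diagonal_mul_diagonal]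
    rfl
  rw [sum_norm_sq_eq_re_trace_conjTranspose_mul_self, hdiag, trace_diagonal, map_sum]
  refine Finset.sum_congr rfl fun j _ => ?_
  rw [mul_right_comm, RCLike.star_def, RCLike.conj_mul, ← RCLike.ofReal_pow, ← RCLike.ofReal_mul,
    RCLike.ofReal_re]

theorem exists_rank_le_card_sum_norm_sq_sub_eq (X : Matrix m n 𝕜) (S : Finset n) :
    ∃ Y : Matrix m n 𝕜, Y.rank ≤ #S ∧
      ∑ i, ∑ j, ‖(X - Y) i j‖ ^ 2 =
        ∑ j ∈ Sᶜ, (isHermitian_conjTranspose_mul_self X).eigenvalues j := by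
  set hA := isHermitian_conjTranspose_mul_self X
  set U : Matrix n n 𝕜 := ↑hA.eigenvectorUnitary
  have hU : U * star U = 1 := (Unitary.mem_iff.mp hA.eigenvectorUnitary.2).2
  set P : Matrix n n 𝕜 := diagonal fun j => if j ∈ S then 1 else 0
  refine ⟨X * U * P * star U, ?_, ?_⟩
  · calc (X * U * P * star U).rank ≤ (X * U * P).rank := rank_mul_le_left _ _
      _ ≤ P.rank := rank_mul_le_right _ _
      _ = #S := by simp [P, rank_diagonal]
  · have hsub : X - X * U * P * star U =
        X * U * diagonal (fun j => if j ∈ Sᶜ then (1 : 𝕜) else 0) * star U := by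
      have hcompl : diagonal (fun j => if j ∈ Sᶜ then (1 : 𝕜) else 0) = 1 - P := by
        rw [← diagonal_one, diagonal_sub]
        congr 1
        ext j
        by_cases hj : j ∈ S <;> simp [hj]
      rw [hcompl, Matrix.mul_sub, Matrix.sub_mul, Matrix.mul_one, Matrix.mul_assoc X U (star U), hU,
        Matrix.mul_one]
    rw [hsub, sum_norm_sq_mul_star_unitary _ hA.eigenvectorUnitary.2,
      sum_norm_sq_mul_eigenvectorUnitary_mul_diagonal]
    simp [apply_ite (‖·‖), Finset.sum_ite, filter_notMem_eq_sdiff, compl_eq_univ_sdiff]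

end Matrix

theorem sum_sq_tail_le_of_decay {n r : ℕ} {σ : Fin n → ℝ} {Z : ℝ} (hσ : ∀ i, 0 ≤ σ i)
    (hdecay : ∀ i j : Fin n, (j : ℕ) = i + r → σ j ≤ Z * σ i) :
    ∑ j with r ≤ j.val, σ j ^ 2 ≤ Z ^ 2 * ∑ i, σ i ^ 2 := by
  set T : Finset (Fin n) := {j | r ≤ j.val}
  let shift : Fin n → Fin n := fun j => ⟨j - r, by omega⟩
  have hinj : Set.InjOn shift T := by
    intro a ha b hb hab
    simp only [T, coe_filter, mem_univ, true_and, Set.mem_ofPred_eq] at ha hb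
    have := congrArg Fin.val hab
    ext; simp only [shift] at this; omega
  calc ∑ j ∈ T, σ j ^ 2 ≤ ∑ j ∈ T, Z ^ 2 * σ (shift j) ^ 2 := by
        refine sum_le_sum fun j hj => ?_
        have hrj : r ≤ (j : ℕ) := (mem_filter.mp hj).2
        rw [← mul_pow]
        exact pow_le_pow_left₀ (hσ j) (hdecay _ _ (by simp [shift]; omega)) 2
    _ = Z ^ 2 * ∑ i ∈ T.image shift, σ i ^ 2 := by rw [sum_image hinj, mul_sum]
    _ ≤ Z ^ 2 * ∑ i, σ i ^ 2 := by
        gcongr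
        exact subset_univ _

theorem low_rank_approx_of_sv_decay_general
    (m n : ℕ) (X : Matrix (Fin m) (Fin n) ℂ)
    (σ : Fin n → ℝ) (hnn : ∀ i, 0 ≤ σ i)
    (e : Fin n ≃ Fin n)
    (hsv : ∀ i, σ i ^ 2 = (Matrix.isHermitian_conjTranspose_mul_self X).eigenvalues (e i))
    (r : ℕ) (Z : ℝ) (hZ0 : 0 ≤ Z)
    (hdecay : ∀ i j : Fin n, (j : ℕ) = (i : ℕ) + r → σ j ≤ Z * σ i) :
    ∃ Y : Matrix (Fin m) (Fin n) ℂ, Y.rank ≤ r ∧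
      Real.sqrt (∑ i, ∑ j, ‖(X - Y) i j‖ ^ 2) ≤ Z * Real.sqrt (∑ i, ∑ j, ‖X i j‖ ^ 2) := by
  set hA := isHermitian_conjTranspose_mul_self X
  set S : Finset (Fin n) := {j | (e.symm j : ℕ) < r}
  obtain ⟨Y, hrank, hY⟩ := exists_rank_le_card_sum_norm_sq_sub_eq X S
  have hcard : #S ≤ r := by
    simpa using card_le_card_of_injOn (fun j => (e.symm j : ℕ)) (t := range r)
      (fun j hj => by simpa [S] using hj) fun a _ b _ h => e.symm.injective (Fin.ext h)
  have htail : ∑ j ∈ Sᶜ, hA.eigenvalues j = ∑ i with r ≤ i.val, σ i ^ 2 := by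
    rw [compl_filter, sum_filter, sum_filter, ← e.sum_comp]
    simp [hsv]
  have htotal : ∑ i, ∑ j, ‖X i j‖ ^ 2 = ∑ i, σ i ^ 2 := by
    rw [sum_norm_sq_eq_re_trace_conjTranspose_mul_self, hA.trace_eq_sum_eigenvalues,
      ← e.sum_comp]
    simp [hsv]
  refine ⟨Y, hrank.trans hcard, ?_⟩
  rw [hY, htail, htotal, ← Real.sqrt_sq hZ0, ← Real.sqrt_mul (sq_nonneg Z)]
  exact Real.sqrt_le_sqrt (sum_sq_tail_le_of_decay hnn hdecay)

/-- Paper's Lemma 4.1: if the singular values of `X ∈ ℂ^{m×n}` (`m ≥ n`)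
satisfy `σ_{j+r} ≤ Z σ_j` for some `0 ≤ Z < 1` and `r ≥ 1`, then there is a
matrix `Y` of rank at most `r` with `‖X − Y‖_F ≤ Z ‖X‖_F`. -/
theorem low_rank_approx_of_sv_decay
    (m n : ℕ) (hmn : n ≤ m) (X : Matrix (Fin m) (Fin n) ℂ)
    (σ : Fin n → ℝ) (hanti : Antitone σ) (hnn : ∀ i, 0 ≤ σ i)
    (e : Fin n ≃ Fin n)
    (hsv : ∀ i, σ i ^ 2 = (Matrix.isHermitian_conjTranspose_mul_self X).eigenvalues (e i))
    (r : ℕ) (hr : 1 ≤ r) (Z : ℝ) (hZ0 : 0 ≤ Z) (hZ1 : Z < 1)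
    (hdecay : ∀ i j : Fin n, (j : ℕ) = (i : ℕ) + r → σ j ≤ Z * σ i) :
    ∃ Y : Matrix (Fin m) (Fin n) ℂ, Y.rank ≤ r ∧
      Real.sqrt (∑ i, ∑ j, ‖(X - Y) i j‖ ^ 2) ≤ Z * Real.sqrt (∑ i, ∑ j, ‖X i j‖ ^ 2) :=
  low_rank_approx_of_sv_decay_general m n X σ hnn e hsv r Z hZ0 hdecay
end

section
/- Let 𝒳, 𝒢 ∈ ℂ^{n₁×n₂×n₃} and A⁽¹⁾, A⁽²⁾, A⁽³⁾ satisfy the tensor Sylvester equation 𝒳 ×₁ A⁽¹⁾ + 𝒳 ×₂ A⁽²⁾ + 𝒳 ×₃ A⁽³⁾ = 𝒢. Suppose U₁ ∈ ℂ^{n₁×s₁} has orthonormal columns (U₁*U₁ = I_{s₁}) and the first unfolding factors as X₁ = U₁W for some W ∈ ℂ^{s₁×(n₂n₃)}. Define C₂ ∈ ℂ^{(s₁n₂)×n₃} by (C₂)_{(ℓ,j),k} = W_{ℓ,(j,k)}, and H₂ ∈ ℂ^{(s₁n₂)×n₃} by (H₂)_{(ℓ,j),k} = (U₁*G₁)_{ℓ,(j,k)}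 where G₁ is the first unfolding of 𝒢. Then ((U₁*A⁽¹⁾U₁) ⊗ I_{n₂} + I_{s₁} ⊗ A⁽²⁾) C₂ + C₂ (A⁽³⁾)ᵀ = H₂. -/
open Matrix Kronecker in
/-- Identity underlying the paper's fADI-based tensor-train Sylvester solver
(Section 5.6): if `𝒳 ×₁ A⁽¹⁾ + 𝒳 ×₂ A⁽²⁾ + 𝒳 ×₃ A⁽³⁾ = 𝒢`, `U₁` has
orthonormal columns and the first unfolding factors as `X₁ = U₁ W`, then the
reshape `C₂` of `W` satisfies
`((U₁*A⁽¹⁾U₁) ⊗ I + I ⊗ A⁽²⁾) C₂ + C₂ (A⁽³⁾)ᵀ = H₂`, where `H₂` is the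
reshape of `U₁* G₁`. -/
theorem fadi_core_sylvester
    (n₁ n₂ n₃ s₁ : ℕ)
    (X G : Fin n₁ → Fin n₂ → Fin n₃ → ℂ)
    (A1 : Matrix (Fin n₁) (Fin n₁) ℂ) (A2 : Matrix (Fin n₂) (Fin n₂) ℂ)
    (A3 : Matrix (Fin n₃) (Fin n₃) ℂ)
    (hSyl : ∀ i j k, (∑ i', A1 i i' * X i' j k) + (∑ j', A2 j j' * X i j' k)
        + (∑ k', A3 k k' * X i j k') = G i j k)
    (U1 : Matrix (Fin n₁) (Fin s₁) ℂ) (hU1 : U1ᴴ * U1 = 1)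
    (W : Matrix (Fin s₁) (Fin n₂ × Fin n₃) ℂ)
    (hW : (Matrix.of fun i (jk : Fin n₂ × Fin n₃) => X i jk.1 jk.2) = U1 * W) :
    ((U1ᴴ * A1 * U1) ⊗ₖ (1 : Matrix (Fin n₂) (Fin n₂) ℂ)
        + (1 : Matrix (Fin s₁) (Fin s₁) ℂ) ⊗ₖ A2)
        * (Matrix.of fun (lj : Fin s₁ × Fin n₂) k => W lj.1 (lj.2, k))
      + (Matrix.of fun (lj : Fin s₁ × Fin n₂) k => W lj.1 (lj.2, k)) * A3ᵀ
      = Matrix.of fun (lj : Fin s₁ × Fin n₂) k =>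
          (U1ᴴ * Matrix.of fun i (jk : Fin n₂ × Fin n₃) => G i jk.1 jk.2)
            lj.1 (lj.2, k) := by
  have hX : ∀ i j k, X i j k = ∑ l, U1 i l * W l (j, k) := by
    intro i j k
    have := congrFun (congrFun hW i) (j, k)
    simpa [Matrix.mul_apply] using this
  have hOrth : ∀ (l l' : Fin s₁), ∑ i, star (U1 i l) * U1 i l'
      = if l = l' then 1 else 0 := by
    intro l l'
    have := congrFun (congrFun hU1 l) l'
    simpa [Matrix.mul_apply, Matrix.one_apply, Matrix.conjTranspose_apply] using this
  ext ⟨l, j⟩ k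
  simp only [Matrix.add_apply, Matrix.mul_apply, Matrix.of_apply,
    Matrix.kroneckerMap_apply, Matrix.one_apply, Matrix.transpose_apply,
    Matrix.conjTranspose_apply]
  have key : ∀ (f : Fin s₁ → ℂ),
      (∑ i, star (U1 i l) * ∑ l', U1 i l' * f l') = f l := by
    intro f
    have h : (∑ i, star (U1 i l) * ∑ l', U1 i l' * f l')
        = ∑ l', (∑ i, star (U1 i l) * U1 i l') * f l' := by
      simp only [Finset.mul_sum, Finset.sum_mul]
      rw [Finset.sum_comm]
      exact Finset.sum_congr rfl fun l' _ => Finset.sum_congr rfl fun i _ => by ring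
    rw [h]
    simp only [hOrth]
    simp
  have h1 : (∑ i, star (U1 i l) * ∑ i', A1 i i' * X i' j k)
      = ∑ l', (∑ i, ∑ i', star (U1 i l) * A1 i i' * U1 i' l') * W l' (j, k) := by
    simp only [hX, Finset.mul_sum, Finset.sum_mul]
    conv_rhs => rw [Finset.sum_comm]
    refine Finset.sum_congr rfl fun i _ => ?_
    rw [Finset.sum_comm]
    exact Finset.sum_congr rfl fun l' _ => Finset.sum_congr rfl fun i' _ => by ring
  have h2 : (∑ i, star (U1 i l) * ∑ j', A2 j j' * X i j' k)
      = ∑ j', A2 j j' * W l (j', k) := by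
    have h : (∑ i, star (U1 i l) * ∑ j', A2 j j' * X i j' k)
        = ∑ j', A2 j j' * ∑ i, star (U1 i l) * ∑ l', U1 i l' * W l' (j', k) := by
      simp only [hX, Finset.mul_sum]
      rw [Finset.sum_comm]
      exact Finset.sum_congr rfl fun j' _ => Finset.sum_congr rfl fun i _ =>
        Finset.sum_congr rfl fun l' _ => by ring
    rw [h]
    exact Finset.sum_congr rfl fun j' _ => by rw [key]
  have h3 : (∑ i, star (U1 i l) * ∑ k', A3 k k' * X i j k')
      = ∑ k', A3 k k' * W l (j, k') := by
    have h : (∑ i, star (U1 i l) * ∑ k', A3 k k' * X i j k')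
        = ∑ k', A3 k k' * ∑ i, star (U1 i l) * ∑ l', U1 i l' * W l' (j, k') := by
      simp only [hX, Finset.mul_sum]
      rw [Finset.sum_comm]
      exact Finset.sum_congr rfl fun k' _ => Finset.sum_congr rfl fun i _ =>
        Finset.sum_congr rfl fun l' _ => by ring
    rw [h]
    exact Finset.sum_congr rfl fun k' _ => by rw [key]
  have hRHS : (∑ i, star (U1 i l) * G i j k)
      = (∑ l', (∑ i, ∑ i', star (U1 i l) * A1 i i' * U1 i' l') * W l' (j, k))
        + (∑ j', A2 j j' * W l (j', k)) + (∑ k', A3 k k' * W l (j, k')) := by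
    rw [← h1, ← h2, ← h3, ← Finset.sum_add_distrib, ← Finset.sum_add_distrib]
    refine Finset.sum_congr rfl fun i _ => ?_
    rw [← hSyl i j k]; ring
  rw [hRHS]
  have hM : ∀ l' : Fin s₁, (∑ i', (∑ i, star (U1 i l) * A1 i i') * U1 i' l')
      = ∑ i, ∑ i', star (U1 i l) * A1 i i' * U1 i' l' := by
    intro l'
    simp only [Finset.sum_mul]
    exact Finset.sum_comm
  congr 1
  · rw [Fintype.sum_prod_type]
    simp only [add_mul, Finset.sum_add_distrib, ite_mul, mul_ite, one_mul, zero_mul,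
      mul_zero, mul_one, Finset.sum_ite_eq, Finset.sum_ite_eq', Finset.mem_univ, if_true]
    congr 1
    · exact Finset.sum_congr rfl fun l' _ => by rw [hM]
    · rw [Finset.sum_comm]
      simp [Finset.sum_ite_eq]
  · -- A3 term
    exact Finset.sum_congr rfl fun k' _ => by ring
end

section
/- Let M ≥ 1 be a real number. Then for every real polynomial p of degree at most 2⌊M⌋ − 1, sup_{t ∈ [−1,1]} |cos(Mπt) − p(t)| ≥ 1. Consequently the best minimax polynomial approximation of degree ≤ 2⌊M⌋ − 1 to cos(Mπt) on [−1,1] is the zero polynomial. -/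
/-!
If some `p` stayed within distance `< 1` of `cos (Mπt)` on `[-1, 1]`, then at the `2⌊M⌋ + 1`
nodes `t = k / M`, `|k| ≤ ⌊M⌋`, where the cosine equals `(-1)^k`, the value `p t` would have the
sign of `(-1)^k`. The `2⌊M⌋` sign changes give `2⌊M⌋` distinct roots of `p`, too many for a
nonzero polynomial of degree at most `2⌊M⌋ - 1`.
-/

open Polynomial Real Set

theorem exists_mem_Ioo_eq_zero_of_mul_neg {f : ℝ → ℝ} {a b : ℝ} (hab : a ≤ b)
    (hf : ContinuousOn f (Icc a b)) (hsign : f a * f b < 0) : ∃ r ∈ Ioo a b, f r = 0 := by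
  rcases mul_neg_iff.mp hsign with ⟨ha, hb⟩ | ⟨ha, hb⟩
  · exact intermediate_value_Ioo' hab hf ⟨hb, ha⟩
  · exact intermediate_value_Ioo hab hf ⟨ha, hb⟩

theorem Polynomial.le_natDegree_of_eval_mul_neg {p : ℝ[X]} {s : ℕ → ℝ} (hs : Monotone s)
    {m : ℕ} (hsign : ∀ j < m, p.eval (s j) * p.eval (s (j + 1)) < 0) : m ≤ p.natDegree := by
  rcases Nat.eq_zero_or_pos m with rfl | hm
  · exact Nat.zero_le _
  have hp : p ≠ 0 := by
    rintro rfl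
    simpa using hsign 0 hm
  choose r hr hroot using fun j : Fin m =>
    exists_mem_Ioo_eq_zero_of_mul_neg (hs j.val.le_succ) p.continuous.continuousOn (hsign j j.isLt)
  have hr_mono : StrictMono r := fun i j hij =>
    calc r i < s (i + 1) := (hr i).2
      _ ≤ s j := hs (Nat.succ_le_of_lt hij)
      _ < r j := (hr j).1
  calc m = (Finset.univ.image r).card := by
        rw [Finset.card_image_of_injective _ hr_mono.injective, Finset.card_univ, Fintype.card_fin]
    _ ≤ p.natDegree := card_le_degree_of_subset_roots fun x hx => by
        obtain ⟨j, -, rfl⟩ := Finset.mem_image.mp (Finset.mem_val.mp hx)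
        exact (mem_roots hp).mpr (hroot j)

theorem mul_pos_of_abs_eq_one_of_abs_sub_lt_one {c y : ℝ} (hc : |c| = 1) (hcy : |c - y| < 1) :
    0 < c * y := by
  have hc2 : c * c = 1 := by rw [← abs_mul_abs_self, hc, one_mul]
  have h : c * (c - y) < 1 := (le_abs_self _).trans_lt (by rwa [abs_mul, hc, one_mul])
  linear_combination h - hc2

theorem Polynomial.le_natDegree_of_alternation {f : ℝ → ℝ} {p : ℝ[X]} {s : ℕ → ℝ}
    (hs : Monotone s) {m : ℕ} (hf_abs : ∀ j ≤ m, |f (s j)| = 1)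
    (hf_alt : ∀ j < m, f (s (j + 1)) = -f (s j))
    (hclose : ∀ j ≤ m, |f (s j) - p.eval (s j)| < 1) : m ≤ p.natDegree := by
  refine le_natDegree_of_eval_mul_neg hs fun j hj => ?_
  have hf2 : f (s j) * f (s j) = 1 := by rw [← abs_mul_abs_self, hf_abs j hj.le, one_mul]
  have h0 := mul_pos_of_abs_eq_one_of_abs_sub_lt_one (hf_abs j hj.le) (hclose j hj.le)
  have h1 := mul_pos_of_abs_eq_one_of_abs_sub_lt_one (hf_abs (j + 1) hj) (hclose (j + 1) hj)
  rw [hf_alt j hj] at h1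
  calc p.eval (s j) * p.eval (s (j + 1))
      = -((f (s j) * p.eval (s j)) * (-f (s j) * p.eval (s (j + 1)))) := by
        linear_combination -(p.eval (s j) * p.eval (s (j + 1))) * hf2
    _ < 0 := neg_neg_of_pos (mul_pos h0 h1)

theorem abs_cos_mul_pi_mul_int_div {M : ℝ} (hM : M ≠ 0) (k : ℤ) :
    |cos (M * π * (k / M))| = 1 := by
  rw [show M * π * (k / M) = k * π by field_simp, abs_cos_int_mul_pi]

theorem cos_mul_pi_mul_add_inv {M : ℝ} (hM : M ≠ 0) (t : ℝ) :
    cos (M * π * (t + M⁻¹)) = -cos (M * π * t) := by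
  rw [show M * π * (t + M⁻¹) = M * π * t + π by field_simp, cos_add_pi]

theorem le_iSup_Icc_of_continuous {g : ℝ → ℝ} (hg : Continuous g) {a b t : ℝ}
    (ht : t ∈ Icc a b) : g t ≤ ⨆ x : Icc a b, g x :=
  le_ciSup (isCompact_range (hg.comp continuous_subtype_val)).bddAbove ⟨t, ht⟩

/-- Claim in Section 3.3.1 of the paper: for `M ≥ 1`, every real polynomial of
degree at most `2⌊M⌋ − 1` has minimax error at least `1` when approximating
`cos(Mπt)` on `[−1,1]`; hence the best such approximation is the zero
polynomial. -/
theorem cos_best_approx_zero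
    (M : ℝ) (hM : 1 ≤ M) (p : Polynomial ℝ)
    (hp : p.natDegree ≤ 2 * ⌊M⌋₊ - 1) :
    1 ≤ ⨆ t : Set.Icc (-1 : ℝ) 1, |Real.cos (M * Real.pi * t) - p.eval (t : ℝ)| := by
  by_contra! hlt
  set n := ⌊M⌋₊
  have hM0 : 0 < M := one_pos.trans_le hM
  have hn : 1 ≤ n := Nat.le_floor (by exact_mod_cast hM)
  have hnM : (n : ℝ) ≤ M := Nat.floor_le hM0.le
  set s : ℕ → ℝ := fun j => (((j : ℤ) - n : ℤ) : ℝ) / M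
  have hs : Monotone s := fun i j hij => by dsimp [s]; gcongr
  have hs_succ : ∀ j, s (j + 1) = s j + M⁻¹ := fun j => by dsimp [s]; push_cast; ring
  have hs_mem : ∀ j ≤ 2 * n, s j ∈ Icc (-1 : ℝ) 1 := fun j hj => by
    have hj' : (j : ℝ) ≤ 2 * n := by exact_mod_cast hj
    dsimp [s]
    push_cast
    rw [mem_Icc, le_div_iff₀ hM0, div_le_iff₀ hM0]
    constructor <;> linarith [(j.cast_nonneg : (0 : ℝ) ≤ j)]
  have hclose : ∀ j ≤ 2 * n, |cos (M * π * s j) - p.eval (s j)| < 1 := fun j hj =>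
    (le_iSup_Icc_of_continuous (g := fun t => |cos (M * π * t) - p.eval t|) (by fun_prop) (hs_mem j hj)).trans_lt hlt
  have h2n : 2 * n ≤ p.natDegree :=
    le_natDegree_of_alternation (f := fun t => cos (M * π * t)) hs (fun j _ => abs_cos_mul_pi_mul_int_div hM0.ne' _)
      (fun j _ => by rw [hs_succ, cos_mul_pi_mul_add_inv hM0.ne']) hclose
  omega
end
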